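/- If u ∈ C⁴[0,1] satisfies u(0)=u'(0)=u''(1)=u'''(1)=0 and u⁗ ≥ 0 on [0,1], then u(t) ≥ ((3-t)t²/3)·‖u‖_∞ for all t ∈ [0,1], where ‖u‖_∞ = sup_{t∈[0,1]} |u(t)|. -/

import Mathlib

/-!
Integrating the sign of `u⁗` back from the boundary gives `u''' ≤ 0`, `u'' ≥ 0`, `u' ≥ 0` and
`u ≥ 0`, so `u` is nondecreasing and `‖u‖_∞ = u 1`. Since `u''` is nonincreasing, `u'` is concave
with `u'(0) = 0`, hence `u'(t s) ≥ t u'(s)`; this makes `s ↦ u(t s) - t² u(s)` nondecreasing, and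
comparing `s = 0` with `s = 1` gives `u t ≥ t² u 1 ≥ (3 - t) t² / 3 · u 1`.
-/

open Set

namespace Convex

variable {D : Set ℝ} {f f' f'' : ℝ → ℝ}

theorem monotoneOn_of_hasDerivWithinAt_nonneg' (hD : Convex ℝ D)
    (hf : ∀ x ∈ D, HasDerivWithinAt f (f' x) D x) (hf'₀ : ∀ x ∈ interior D, 0 ≤ f' x) :
    MonotoneOn f D :=
  monotoneOn_of_hasDerivWithinAt_nonneg hD (fun x hx => (hf x hx).continuousWithinAt)
    (fun x hx => (hf x (interior_subset hx)).mono interior_subset) hf'₀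

theorem antitoneOn_of_hasDerivWithinAt_nonpos' (hD : Convex ℝ D)
    (hf : ∀ x ∈ D, HasDerivWithinAt f (f' x) D x) (hf'₀ : ∀ x ∈ interior D, f' x ≤ 0) :
    AntitoneOn f D :=
  antitoneOn_of_hasDerivWithinAt_nonpos hD (fun x hx => (hf x hx).continuousWithinAt)
    (fun x hx => (hf x (interior_subset hx)).mono interior_subset) hf'₀

theorem concaveOn_of_hasDerivWithinAt2_nonpos' (hD : Convex ℝ D)
    (hf : ∀ x ∈ D, HasDerivWithinAt f (f' x) D x)
    (hf' : ∀ x ∈ D, HasDerivWithinAt f' (f'' x) D x) (hf''₀ : ∀ x ∈ interior D, f'' x ≤ 0) :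
    ConcaveOn ℝ D f :=
  concaveOn_of_hasDerivWithinAt2_nonpos hD (fun x hx => (hf x hx).continuousWithinAt)
    (fun x hx => (hf x (interior_subset hx)).mono interior_subset)
    (fun x hx => (hf' x (interior_subset hx)).mono interior_subset) hf''₀

end Convex

theorem csSup_image_abs_Icc_of_monotoneOn {f : ℝ → ℝ} {a b : ℝ} (hab : a ≤ b)
    (hf : MonotoneOn f (Icc a b)) (ha : 0 ≤ f a) :
    sSup ((fun s => |f s|) '' Icc a b) = f b := by
  have hb : b ∈ Icc a b := right_mem_Icc.2 hab
  have abs_eq : ∀ x ∈ Icc a b, |f x| = f x := fun x hx =>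
    abs_of_nonneg (ha.trans (hf (left_mem_Icc.2 hab) hx hx.1))
  refine IsGreatest.csSup_eq ⟨⟨b, hb, abs_eq b hb⟩, ?_⟩
  rintro _ ⟨x, hx, rfl⟩
  exact (abs_eq x hx).trans_le (hf hx hb hx.2)

theorem sq_mul_le_comp_mul_of_concaveOn_deriv {f f' : ℝ → ℝ}
    (hf : ∀ x ∈ Icc (0:ℝ) 1, HasDerivWithinAt f (f' x) (Icc 0 1) x)
    (hconc : ConcaveOn ℝ (Icc 0 1) f') (hf₀ : 0 ≤ f 0) (hf'₀ : 0 ≤ f' 0)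
    {t x : ℝ} (ht : t ∈ Icc (0:ℝ) 1) (hx : x ∈ Icc (0:ℝ) 1) :
    t ^ 2 * f x ≤ f (t * x) := by
  have h0 : (0:ℝ) ∈ Icc (0:ℝ) 1 := left_mem_Icc.2 zero_le_one
  have hmaps : MapsTo (t * ·) (Icc (0:ℝ) 1) (Icc 0 1) := fun y hy =>
    ⟨mul_nonneg ht.1 hy.1, mul_le_one₀ ht.2 hy.1 hy.2⟩
  have hderiv : ∀ y ∈ Icc (0:ℝ) 1, HasDerivWithinAt (fun y => f (t * y) - t ^ 2 * f y)
      (f' (t * y) * t - t ^ 2 * f' y) (Icc 0 1) y := fun y hy =>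
    ((hf _ (hmaps hy)).comp y ((hasDerivAt_id' y).const_mul t).hasDerivWithinAt hmaps
      |>.sub ((hf y hy).const_mul _)) |>.congr_deriv (by ring)
  have hchord : ∀ y ∈ Icc (0:ℝ) 1, t * f' y ≤ f' (t * y) := fun y hy => by
    have := hconc.2 h0 hy (sub_nonneg.2 ht.2) ht.1 (by ring)
    simp only [smul_eq_mul, mul_zero, zero_add] at this
    nlinarith [mul_nonneg (sub_nonneg.2 ht.2) hf'₀]
  have hmono := (convex_Icc (0:ℝ) 1).monotoneOn_of_hasDerivWithinAt_nonneg' hderiv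
    fun y hy => by
      have hy := interior_subset hy
      nlinarith [mul_le_mul_of_nonneg_left (hchord y hy) ht.1]
  have := hmono h0 hx hx.1
  simp only [mul_zero] at this
  nlinarith [mul_nonneg (sub_nonneg.2 (pow_le_one₀ ht.1 ht.2 : t ^ 2 ≤ 1)) hf₀]

theorem stmt12_general (u u1 u2 u3 u4 : ℝ → ℝ)
    (hu1 : ∀ t ∈ Set.Icc (0:ℝ) 1, HasDerivWithinAt u (u1 t) (Set.Icc 0 1) t)
    (hu2 : ∀ t ∈ Set.Icc (0:ℝ) 1, HasDerivWithinAt u1 (u2 t) (Set.Icc 0 1) t)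
    (hu3 : ∀ t ∈ Set.Icc (0:ℝ) 1, HasDerivWithinAt u2 (u3 t) (Set.Icc 0 1) t)
    (hu4 : ∀ t ∈ Set.Icc (0:ℝ) 1, HasDerivWithinAt u3 (u4 t) (Set.Icc 0 1) t)
    (hb0 : u 0 = 0) (hb1 : u1 0 = 0) (hb2 : u2 1 = 0) (hb3 : u3 1 = 0)
    (hpos : ∀ t ∈ Set.Icc (0:ℝ) 1, 0 ≤ u4 t) :
    ∀ t ∈ Set.Icc (0:ℝ) 1,
      u t ≥ (3 - t) * t ^ 2 / 3 * sSup ((fun s => |u s|) '' Set.Icc (0:ℝ) 1) := by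
  have hI : Convex ℝ (Icc (0:ℝ) 1) := convex_Icc 0 1
  have h0 : (0:ℝ) ∈ Icc (0:ℝ) 1 := left_mem_Icc.2 zero_le_one
  have h1 : (1:ℝ) ∈ Icc (0:ℝ) 1 := right_mem_Icc.2 zero_le_one
  have hu3_nonpos : ∀ x ∈ Icc (0:ℝ) 1, u3 x ≤ 0 := fun x hx => hb3 ▸
    hI.monotoneOn_of_hasDerivWithinAt_nonneg' hu4 (fun y hy => hpos y (interior_subset hy))
      hx h1 hx.2
  have hu2_nonneg : ∀ x ∈ Icc (0:ℝ) 1, 0 ≤ u2 x := fun x hx => hb2 ▸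
    hI.antitoneOn_of_hasDerivWithinAt_nonpos' hu3 (fun y hy => hu3_nonpos y (interior_subset hy))
      hx h1 hx.2
  have hu1_nonneg : ∀ x ∈ Icc (0:ℝ) 1, 0 ≤ u1 x := fun x hx => hb1 ▸
    hI.monotoneOn_of_hasDerivWithinAt_nonneg' hu2 (fun y hy => hu2_nonneg y (interior_subset hy))
      h0 hx hx.1
  have hu_mono : MonotoneOn u (Icc 0 1) :=
    hI.monotoneOn_of_hasDerivWithinAt_nonneg' hu1 fun y hy => hu1_nonneg y (interior_subset hy)
  have hu1_conc : ConcaveOn ℝ (Icc 0 1) u1 :=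
    hI.concaveOn_of_hasDerivWithinAt2_nonpos' hu2 hu3 fun y hy => hu3_nonpos y (interior_subset hy)
  rw [csSup_image_abs_Icc_of_monotoneOn zero_le_one hu_mono hb0.ge]
  intro t ht
  have hsq := sq_mul_le_comp_mul_of_concaveOn_deriv hu1 hu1_conc hb0.ge hb1.ge ht h1
  rw [mul_one] at hsq
  have hu_one : 0 ≤ u 1 := hb0 ▸ hu_mono h0 h1 zero_le_one
  nlinarith [mul_nonneg (mul_nonneg ht.1 (sq_nonneg t)) hu_one]

theorem stmt12 (u u1 u2 u3 u4 : ℝ → ℝ)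
    (hu1 : ∀ t ∈ Set.Icc (0:ℝ) 1, HasDerivWithinAt u (u1 t) (Set.Icc 0 1) t)
    (hu2 : ∀ t ∈ Set.Icc (0:ℝ) 1, HasDerivWithinAt u1 (u2 t) (Set.Icc 0 1) t)
    (hu3 : ∀ t ∈ Set.Icc (0:ℝ) 1, HasDerivWithinAt u2 (u3 t) (Set.Icc 0 1) t)
    (hu4 : ∀ t ∈ Set.Icc (0:ℝ) 1, HasDerivWithinAt u3 (u4 t) (Set.Icc 0 1) t)
    (hc4 : ContinuousOn u4 (Set.Icc 0 1))
    (hb0 : u 0 = 0) (hb1 : u1 0 = 0) (hb2 : u2 1 = 0) (hb3 : u3 1 = 0)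
    (hpos : ∀ t ∈ Set.Icc (0:ℝ) 1, 0 ≤ u4 t) :
    ∀ t ∈ Set.Icc (0:ℝ) 1,
      u t ≥ (3 - t) * t ^ 2 / 3 * sSup ((fun s => |u s|) '' Set.Icc (0:ℝ) 1) :=
  stmt12_general u u1 u2 u3 u4 hu1 hu2 hu3 hu4 hb0 hb1 hb2 hb3 hpos
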